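/- Let A be a metric space, let p : ℝ → [0, ∞) be a Borel measurable probability density with respect to Lebesgue measure (∫_ℝ p(w) dw = 1), let m : A → ℝ and s : A → ℝ be continuous, and suppose there is a constant σ̲ > 0 with s(u) ≥ σ̲ for all u ∈ A. Then for every bounded Borel measurable function V : ℝ → ℝ, the map u ↦ ∫_ℝ V(m(u) + s(u) w) p(w) dw is continuous on A. -/

import Mathlib

open MeasureTheory Filter Topology

/-- Change of variables for an affine substitution on the line. -/
lemma cov_affine (F : ℝ → ℝ) (a b : ℝ) (hb : 0 < b) :
    ∫ w : ℝ, F (a + b * w) = b⁻¹ * ∫ y : ℝ, F y := by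
  have h1 : (∫ w : ℝ, (fun x => F (a + x)) (b * w)) = |b⁻¹| • ∫ y : ℝ, F (a + y) :=
    MeasureTheory.Measure.integral_comp_mul_left (fun x => F (a + x)) b
  have h2 : (∫ y : ℝ, F (a + y)) = ∫ y : ℝ, F y :=
    integral_add_left_eq_self F a
  rw [h2] at h1
  simpa [abs_of_pos (inv_pos.mpr hb), smul_eq_mul] using h1

/-- Continuity in `u` of `∫ y, V y * g ((y - m u)/ s u)` for continuous compactly
supported `g`. -/
lemma continuous_J
    {A : Type*} [MetricSpace A]
    (m s : A → ℝ) (hm : Continuous m) (hs : Continuous s)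
    (σ₀ : ℝ) (hσ₀ : 0 < σ₀) (hslb : ∀ u, σ₀ ≤ s u)
    (V : ℝ → ℝ) (hV : Measurable V) (M : ℝ) (hM : ∀ x, |V x| ≤ M)
    (g : ℝ → ℝ) (hg : Continuous g) (hgs : HasCompactSupport g) :
    Continuous fun u => ∫ y : ℝ, V y * g ((y - m u) / s u) := by
  have hsne : ∀ u, s u ≠ 0 := fun u => (lt_of_lt_of_le hσ₀ (hslb u)).ne'
  have hspos : ∀ u, 0 < s u := fun u => lt_of_lt_of_le hσ₀ (hslb u)
  have hM0 : 0 ≤ M := le_trans (abs_nonneg _) (hM 0)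
  obtain ⟨C, hC⟩ := hg.bounded_above_of_compact_support hgs
  have hC0 : 0 ≤ C := le_trans (norm_nonneg _) (hC 0)
  -- the support of `g` is contained in a closed ball
  obtain ⟨R₀, hR₀⟩ : ∃ R : ℝ, tsupport g ⊆ Metric.closedBall 0 R :=
    (hgs.isBounded).subset_closedBall 0
  set R : ℝ := max R₀ 0 with hRdef
  have hR : tsupport g ⊆ Metric.closedBall 0 R :=
    hR₀.trans (Metric.closedBall_subset_closedBall (le_max_left _ _))
  have hR0 : 0 ≤ R := le_max_right _ _
  rw [continuous_iff_continuousAt]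
  intro u₀
  set R' : ℝ := |m u₀| + 1 + R * (s u₀ + 1) with hR'def
  have hRspos : 0 < s u₀ + 1 := by linarith [hspos u₀]
  -- eventual bound on parameters
  have hev : ∀ᶠ u in 𝓝 u₀, |m u - m u₀| < 1 ∧ s u < s u₀ + 1 := by
    have h1 : Tendsto (fun u => |m u - m u₀|) (𝓝 u₀) (𝓝 |m u₀ - m u₀|) :=
      ((hm.tendsto u₀).sub tendsto_const_nhds).abs
    have h2 : Tendsto s (𝓝 u₀) (𝓝 (s u₀)) := hs.tendsto u₀
    have e1 : ∀ᶠ u in 𝓝 u₀, |m u - m u₀| < 1 := by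
      have : |m u₀ - m u₀| < 1 := by simp
      exact h1.eventually_lt_const (by simpa using this)
    have e2 : ∀ᶠ u in 𝓝 u₀, s u < s u₀ + 1 :=
      h2.eventually_lt_const (by linarith)
    exact e1.and e2
  have key : Tendsto (fun u => ∫ y : ℝ, V y * g ((y - m u) / s u)) (𝓝 u₀)
      (𝓝 (∫ y : ℝ, V y * g ((y - m u₀) / s u₀))) := by
    apply tendsto_integral_filter_of_dominated_convergence
      (fun y => Set.indicator (Metric.closedBall (0:ℝ) R') (fun _ => M * C) y)
    · -- a.e. strong measurability
      filter_upwards with u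
      exact (hV.mul ((hg.measurable).comp
        (((measurable_id.sub measurable_const)).div_const _))).aestronglyMeasurable
    · -- domination
      filter_upwards [hev] with u hu
      filter_upwards with y
      by_cases hy : y ∈ Metric.closedBall (0:ℝ) R'
      · rw [Set.indicator_of_mem hy]
        calc ‖V y * g ((y - m u) / s u)‖
            = |V y| * ‖g ((y - m u) / s u)‖ := by
              rw [norm_mul]; rfl
          _ ≤ M * C := mul_le_mul (hM y) (hC _) (norm_nonneg _) hM0
      · rw [Set.indicator_of_notMem hy]
        have hyR : R' < |y| := by
          simpa [Real.norm_eq_abs] using (Metric.mem_closedBall.not.mp hy)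
        have hout : g ((y - m u) / s u) = 0 := by
          apply image_eq_zero_of_notMem_tsupport
          intro hmem
          have := hR hmem
          rw [Metric.mem_closedBall] at this
          simp only [dist_zero_right, Real.norm_eq_abs] at this
          -- |(y - m u)/ s u| ≤ R, so |y - m u| ≤ R * s u ≤ R * (s u₀ + 1)
          have hsu : 0 < s u := hspos u
          rw [abs_div, abs_of_pos hsu, div_le_iff₀ hsu] at this
          have h1 : |y| - |m u| ≤ |y - m u| := by
            have := abs_sub_abs_le_abs_sub y (m u)
            linarith
          have h2 : |m u| ≤ |m u₀| + 1 := by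
            have := abs_sub_abs_le_abs_sub (m u) (m u₀)
            have := hu.1
            linarith [abs_sub_abs_le_abs_sub (m u) (m u₀)]
          have h3 : R * s u ≤ R * (s u₀ + 1) :=
            mul_le_mul_of_nonneg_left (le_of_lt hu.2) hR0
          have : |y| ≤ |m u₀| + 1 + R * (s u₀ + 1) := by linarith
          linarith [hR'def ▸ this]
        simp [hout]
    · -- integrability of the bound
      rw [integrable_indicator_iff measurableSet_closedBall]
      refine integrableOn_const ?_
      exact (measure_closedBall_lt_top).ne
    · -- pointwise convergence
      filter_upwards with y
      have hcont : ContinuousAt (fun u => V y * g ((y - m u) / s u)) u₀ := by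
        apply ContinuousAt.mul continuousAt_const
        exact hg.continuousAt.comp
          (((continuousAt_const.sub hm.continuousAt).div hs.continuousAt (hsne u₀)))
      exact hcont.tendsto
  exact key

set_option maxHeartbeats 800000 in
/-- **Continuity of the kernel in the control.** If the noise has a Borel density `p`,
the drift `m` and volatility `s` are continuous in the control, and `s` is bounded
below by a positive constant, then `u ↦ E[V(m(u) + s(u) W)]` is continuous for every
bounded Borel measurable `V`. -/
theorem continuous_integral_density_kernel
    {A : Type*} [MetricSpace A]
    (p : ℝ → ℝ) (hpmeas : Measurable p) (hpnn : ∀ w, 0 ≤ p w)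
    (hpint : ∫ w : ℝ, p w = 1)
    (m s : A → ℝ) (hm : Continuous m) (hs : Continuous s)
    (σ₀ : ℝ) (hσ₀ : 0 < σ₀) (hslb : ∀ u, σ₀ ≤ s u) :
    ∀ V : ℝ → ℝ, Measurable V → (∃ M : ℝ, ∀ x, |V x| ≤ M) →
      Continuous fun u => ∫ w : ℝ, V (m u + s u * w) * p w := by
  rintro V hV ⟨M, hM⟩
  have hM0 : 0 ≤ M := le_trans (abs_nonneg _) (hM 0)
  have hspos : ∀ u, 0 < s u := fun u => lt_of_lt_of_le hσ₀ (hslb u)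
  have hsne : ∀ u, s u ≠ 0 := fun u => (hspos u).ne'
  -- `p` is integrable since its integral is nonzero
  have hpInt : Integrable p := by
    by_contra h
    rw [integral_undef h] at hpint
    norm_num at hpint
  -- measurability of the composed map
  have hVmeas : ∀ u : A, Measurable fun w : ℝ => V (m u + s u * w) := fun u =>
    hV.comp (measurable_const.add (measurable_const.mul measurable_id))
  -- integrability of V(...)·q for integrable q
  have hint : ∀ (u : A) (q : ℝ → ℝ), Integrable q →
      Integrable (fun w => V (m u + s u * w) * q w) := by
    intro u q hq
    exact hq.bdd_mul (hVmeas u).aestronglyMeasurable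
      (Filter.Eventually.of_forall fun w => by simpa [Real.norm_eq_abs] using hM _)
  -- uniform bound on the difference of the integrals
  have hdiff : ∀ (u : A) (g : ℝ → ℝ), Integrable g →
      |(∫ w : ℝ, V (m u + s u * w) * p w) - ∫ w : ℝ, V (m u + s u * w) * g w| ≤
        M * ∫ w : ℝ, ‖p w - g w‖ := by
    intro u g hg
    rw [← integral_sub (hint u p hpInt) (hint u g hg)]
    have : (∫ w : ℝ, (V (m u + s u * w) * p w - V (m u + s u * w) * g w)) =
        ∫ w : ℝ, V (m u + s u * w) * (p w - g w) := by
      congr 1; ext w; ring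
    rw [this]
    calc |∫ w : ℝ, V (m u + s u * w) * (p w - g w)|
        ≤ ∫ w : ℝ, ‖V (m u + s u * w) * (p w - g w)‖ := by
          simpa [Real.norm_eq_abs] using
            norm_integral_le_integral_norm (fun w => V (m u + s u * w) * (p w - g w))
      _ ≤ ∫ w : ℝ, M * ‖p w - g w‖ := by
          apply integral_mono_of_nonneg
          · filter_upwards with w; positivity
          · exact (hpInt.sub hg).norm.const_mul M
          · filter_upwards with w
            rw [norm_mul]
            exact mul_le_mul_of_nonneg_right (by simpa [Real.norm_eq_abs] using hM _)
              (norm_nonneg _)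
      _ = M * ∫ w : ℝ, ‖p w - g w‖ := integral_const_mul M _
  -- continuity of the approximating integrals
  have happrox : ∀ g : ℝ → ℝ, Continuous g → HasCompactSupport g →
      Continuous fun u => ∫ w : ℝ, V (m u + s u * w) * g w := by
    intro g hg hgs
    have heq : ∀ u : A, (∫ w : ℝ, V (m u + s u * w) * g w) =
        (s u)⁻¹ * ∫ y : ℝ, V y * g ((y - m u) / s u) := by
      intro u
      have := cov_affine (fun y => V y * g ((y - m u) / s u)) (m u) (s u) (hspos u)
      rw [← this]
      congr 1
      ext w
      simp only [add_sub_cancel_left, mul_div_cancel_left₀ _ (hsne u)]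
    have hJ : Continuous fun u => ∫ y : ℝ, V y * g ((y - m u) / s u) :=
      continuous_J m s hm hs σ₀ hσ₀ hslb V hV M hM g hg hgs
    have : Continuous fun u => (s u)⁻¹ * ∫ y : ℝ, V y * g ((y - m u) / s u) :=
      (hs.inv₀ hsne).mul hJ
    exact this.congr fun u => (heq u).symm
  -- uniform approximation argument
  apply continuous_of_uniform_approx_of_continuous
  intro U hU
  obtain ⟨ε, hε, hUε⟩ := Metric.mem_uniformity_dist.mp hU
  have hεpos : 0 < ε / (2 * (M + 1)) := by positivity
  obtain ⟨g, hgs, hgL1, hg, hgInt⟩ :=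
    hpInt.exists_hasCompactSupport_integral_sub_le hεpos
  refine ⟨fun u => ∫ w : ℝ, V (m u + s u * w) * g w, happrox g hg hgs, fun u => ?_⟩
  apply hUε
  rw [Real.dist_eq]
  calc |(∫ w : ℝ, V (m u + s u * w) * p w) - ∫ w : ℝ, V (m u + s u * w) * g w|
      ≤ M * ∫ w : ℝ, ‖p w - g w‖ := hdiff u g hgInt
    _ ≤ M * (ε / (2 * (M + 1))) := mul_le_mul_of_nonneg_left hgL1 hM0
    _ < ε := by
        rw [div_eq_mul_inv, ← mul_assoc]
        have h1 : M * ε < (2 * (M + 1)) * ε := by nlinarith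
        calc M * ε * (2 * (M + 1))⁻¹ < (2 * (M + 1)) * ε * (2 * (M + 1))⁻¹ := by
              apply mul_lt_mul_of_pos_right h1; positivity
          _ = ε := by field_simp
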